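/- Fix ν, Δt > 0. Let n^k, n^ℓ ∈ ℝᴺ and let g^k, g^ℓ : ℝ → ℝᴺ be componentwise integrable with v ↦ v·g^ℓ(v) componentwise integrable; set f^k := 𝓜·n^k + g^k and f^ℓ := 𝓜·n^ℓ + g^ℓ. Suppose n^{ℓ+1} ∈ ℝᴺ and g^{ℓ+1} : ℝ → ℝᴺ satisfy the MM-HOLO update: n^{ℓ+1} + u₀·Δt·A n^{ℓ+1} = n_{f^k} − Δt·A·∫_ℝ v·(g^ℓ(v) − 𝓜(v)·n_{g^ℓ}) dv, and for a.e. v, g^{ℓ+1}(v) + Δt·v·A g^{ℓ+1}(v) + ν·Δt·g^{ℓ+1}(v) = 𝓜(v)·n^k + g^k(v) − 𝓜(v)·n^{ℓ+1} − Δt·v·𝓜(v)·(A n^{ℓ+1}); and suppose ñ^{ℓ+1} ∈ ℝᴺ and f̃^{ℓ+1} : ℝ → ℝᴺ satisfy the HOLO update: ñ^{ℓ+1} + u₀·Δt·A ñ^{ℓ+1} = n_{f^k} − Δt·A·∫_ℝ v·(f^ℓ(v) − 𝓜(v)·n_{f^ℓ}) dv, and for a.e. v, f̃^{ℓ+1}(v)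 + Δt·v·A f̃^{ℓ+1}(v) + ν·Δt·f̃^{ℓ+1}(v) = f^k(v) + ν·Δt·𝓜(v)·ñ^{ℓ+1}. Then ñ^{ℓ+1} = n^{ℓ+1} and f̃^{ℓ+1}(v) = 𝓜(v)·n^{ℓ+1} + g^{ℓ+1}(v) for almost every v. (Claim at the end of Section 4.3 of the paper: for the linear BGK model without velocity discretization, the MM-HOLO method is equivalent to the HOLO method.) -/
import Mathlib


open MeasureTheory Matrix

lemma skew_dot {N : ℕ} (A : Matrix (Fin N) (Fin N) ℝ) (hA : A.transpose = -A)
    (z : Fin N → ℝ) : z ⬝ᵥ A.mulVec z = 0 := by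
  have h1 : z ⬝ᵥ A.mulVec z = A.vecMul z ⬝ᵥ z := Matrix.dotProduct_mulVec z A z
  have h2 : A.vecMul z = Aᵀ.mulVec z := (Matrix.mulVec_transpose A z).symm
  rw [h2, hA] at h1
  rw [Matrix.neg_mulVec, neg_dotProduct, dotProduct_comm] at h1
  rw [dotProduct_comm]; linarith

lemma key_inj {N : ℕ} (A : Matrix (Fin N) (Fin N) ℝ) (hA : A.transpose = -A)
    (a c : ℝ) (ha : 0 < a) (x y : Fin N → ℝ)
    (h : a • x + c • A.mulVec x = a • y + c • A.mulVec y) : x = y := by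
  set z := x - y with hz
  have hzeq : a • z + c • A.mulVec z = 0 := by
    rw [hz, Matrix.mulVec_sub, smul_sub, smul_sub]
    rw [← sub_eq_zero] at h
    rw [← h]; module
  have hd : z ⬝ᵥ (a • z + c • A.mulVec z) = 0 := by rw [hzeq]; simp
  rw [dotProduct_add, dotProduct_smul, dotProduct_smul,
    skew_dot A hA z, smul_zero, add_zero, smul_eq_mul] at hd
  have hzz : z ⬝ᵥ z = 0 := by
    rcases mul_eq_zero.mp hd with h' | h'
    · exact absurd h' ha.ne'
    · exact h'
  have hz0 : z = 0 := by rwa [dotProduct_self_eq_zero] at hzz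
  exact sub_eq_zero.mp hz0

/-- The static Maxwellian `𝓜(v) = (2πθ₀)^{-1/2} exp(-(v-u₀)²/(2θ₀))`. -/
noncomputable def staticMaxwellian (u₀ θ₀ v : ℝ) : ℝ :=
  (Real.sqrt (2 * Real.pi * θ₀))⁻¹ * Real.exp (-(v - u₀) ^ 2 / (2 * θ₀))

lemma maxwellian_eq (u₀ θ₀ : ℝ) (v : ℝ) :
    staticMaxwellian u₀ θ₀ v
      = (Real.sqrt (2 * Real.pi * θ₀))⁻¹ * Real.exp (-(2*θ₀)⁻¹ * (v - u₀) ^ 2) := by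
  unfold staticMaxwellian
  ring_nf

lemma maxwellian_integrable (u₀ θ₀ : ℝ) (hθ₀ : 0 < θ₀) :
    Integrable (staticMaxwellian u₀ θ₀) := by
  have h : Integrable (fun v : ℝ => Real.exp (-(2*θ₀)⁻¹ * v ^ 2)) :=
    integrable_exp_neg_mul_sq (by positivity)
  have h2 : Integrable (fun v : ℝ => Real.exp (-(2*θ₀)⁻¹ * (v - u₀) ^ 2)) :=
    h.comp_sub_right u₀
  have := h2.const_mul ((Real.sqrt (2 * Real.pi * θ₀))⁻¹)
  refine this.congr (Filter.Eventually.of_forall fun v => ?_)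
  rw [maxwellian_eq u₀ θ₀ v]

lemma maxwellian_integral (u₀ θ₀ : ℝ) (hθ₀ : 0 < θ₀) :
    ∫ v : ℝ, staticMaxwellian u₀ θ₀ v = 1 := by
  have hg : ∫ v : ℝ, Real.exp (-(2*θ₀)⁻¹ * (v - u₀) ^ 2)
      = Real.sqrt (Real.pi / (2*θ₀)⁻¹) := by
    rw [integral_sub_right_eq_self (fun v : ℝ => Real.exp (-(2*θ₀)⁻¹ * v ^ 2)) u₀]
    exact integral_gaussian _
  have hs : Real.sqrt (Real.pi / (2*θ₀)⁻¹) = Real.sqrt (2 * Real.pi * θ₀) := by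
    rw [div_inv_eq_mul]; ring_nf
  calc ∫ v : ℝ, staticMaxwellian u₀ θ₀ v
      = ∫ v : ℝ, (Real.sqrt (2 * Real.pi * θ₀))⁻¹ * Real.exp (-(2*θ₀)⁻¹ * (v - u₀) ^ 2) :=
        integral_congr_ae (Filter.Eventually.of_forall fun v => maxwellian_eq u₀ θ₀ v)
    _ = (Real.sqrt (2 * Real.pi * θ₀))⁻¹ * ∫ v : ℝ, Real.exp (-(2*θ₀)⁻¹ * (v - u₀) ^ 2) :=
        integral_const_mul _ _
    _ = 1 := by
        rw [hg, hs, inv_mul_cancel₀]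
        positivity

/-- **Equivalence of the MM-HOLO and HOLO methods for the linear BGK model** (end of
Section 4.3 of the paper): one MM-HOLO update starting from `(n^ℓ, g^ℓ)` produces the same
macro moments and the same kinetic distribution `𝓜 n^{ℓ+1} + g^{ℓ+1}` as one HOLO update
starting from `f^ℓ = 𝓜 n^ℓ + g^ℓ`. -/
theorem mm_holo_equiv_holo
    {N : ℕ} (hN : 1 ≤ N) (u₀ θ₀ : ℝ) (hθ₀ : 0 < θ₀)
    (A : Matrix (Fin N) (Fin N) ℝ) (hA : A.transpose = -A)
    (ν Δt : ℝ) (hν : 0 < ν) (hΔt : 0 < Δt)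
    (nk nl : Fin N → ℝ) (gk gl : ℝ → Fin N → ℝ)
    (hgk : Integrable gk) (hgl : Integrable gl)
    (hvgl : Integrable fun v => v • gl v)
    (nl1 : Fin N → ℝ) (gl1 : ℝ → Fin N → ℝ)
    -- MM-HOLO low-order update
    (hMMlow : nl1 + (u₀ * Δt) • A.mulVec nl1
        = (∫ v : ℝ, (staticMaxwellian u₀ θ₀ v • nk + gk v))
          - Δt • A.mulVec (∫ v : ℝ, v •
              (gl v - staticMaxwellian u₀ θ₀ v • (∫ w : ℝ, gl w))))
    -- MM-HOLO high-order update
    (hMMhigh : ∀ᵐ v : ℝ, gl1 v + (Δt * v) • A.mulVec (gl1 v) + (ν * Δt) • gl1 v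
        = staticMaxwellian u₀ θ₀ v • nk + gk v - staticMaxwellian u₀ θ₀ v • nl1
          - (Δt * v * staticMaxwellian u₀ θ₀ v) • A.mulVec nl1)
    (ntl1 : Fin N → ℝ) (ftl1 : ℝ → Fin N → ℝ)
    -- HOLO low-order update, with f^ℓ = 𝓜 n^ℓ + g^ℓ and f^k = 𝓜 n^k + g^k
    (hHOLOlow : ntl1 + (u₀ * Δt) • A.mulVec ntl1
        = (∫ v : ℝ, (staticMaxwellian u₀ θ₀ v • nk + gk v))
          - Δt • A.mulVec (∫ v : ℝ, v •
              ((staticMaxwellian u₀ θ₀ v • nl + gl v)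
                - staticMaxwellian u₀ θ₀ v •
                  (∫ w : ℝ, (staticMaxwellian u₀ θ₀ w • nl + gl w)))))
    -- HOLO high-order update
    (hHOLOhigh : ∀ᵐ v : ℝ, ftl1 v + (Δt * v) • A.mulVec (ftl1 v) + (ν * Δt) • ftl1 v
        = (staticMaxwellian u₀ θ₀ v • nk + gk v)
          + (ν * Δt) • (staticMaxwellian u₀ θ₀ v • ntl1)) :
    ntl1 = nl1 ∧
      ∀ᵐ v : ℝ, ftl1 v = staticMaxwellian u₀ θ₀ v • nl1 + gl1 v := by
  have hMint : Integrable (staticMaxwellian u₀ θ₀) := maxwellian_integrable u₀ θ₀ hθ₀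
  have hMone : ∫ v : ℝ, staticMaxwellian u₀ θ₀ v = 1 := maxwellian_integral u₀ θ₀ hθ₀
  have hMnl : Integrable (fun w : ℝ => staticMaxwellian u₀ θ₀ w • nl) :=
    hMint.smul_const nl
  have hInner : (∫ w : ℝ, (staticMaxwellian u₀ θ₀ w • nl + gl w)) = nl + ∫ w : ℝ, gl w := by
    rw [integral_add hMnl hgl, integral_smul_const, hMone, one_smul]
  have hflux : (∫ v : ℝ, v •
        ((staticMaxwellian u₀ θ₀ v • nl + gl v)
          - staticMaxwellian u₀ θ₀ v •
            (∫ w : ℝ, (staticMaxwellian u₀ θ₀ w • nl + gl w))))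
      = ∫ v : ℝ, v • (gl v - staticMaxwellian u₀ θ₀ v • (∫ w : ℝ, gl w)) := by
    refine integral_congr_ae (Filter.Eventually.of_forall fun v => ?_)
    rw [hInner]
    module
  have hn : ntl1 = nl1 := by
    refine key_inj A hA 1 (u₀ * Δt) one_pos _ _ ?_
    simp only [one_smul]
    rw [hHOLOlow, hflux]
    exact hMMlow.symm
  refine ⟨hn, ?_⟩
  rw [hn] at hHOLOhigh
  filter_upwards [hMMhigh, hHOLOhigh] with v h1 h2
  refine key_inj A hA (1 + ν * Δt) (Δt * v) (by positivity) _ _ ?_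
  have e2 : (1 + ν * Δt) • ftl1 v + (Δt * v) • A.mulVec (ftl1 v)
      = (staticMaxwellian u₀ θ₀ v • nk + gk v)
        + (ν * Δt) • (staticMaxwellian u₀ θ₀ v • nl1) := by
    rw [← h2]; module
  have e1 : (1 + ν * Δt) • (staticMaxwellian u₀ θ₀ v • nl1 + gl1 v)
        + (Δt * v) • A.mulVec (staticMaxwellian u₀ θ₀ v • nl1 + gl1 v)
      = (staticMaxwellian u₀ θ₀ v • nk + gk v)
        + (ν * Δt) • (staticMaxwellian u₀ θ₀ v • nl1) := by
    rw [Matrix.mulVec_add, Matrix.mulVec_smul]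
    linear_combination (norm := module) h1
  rw [e1, e2]
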